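/- Let G be a graph and w=(w_0,...,w_l) ∈ ℤ⁺ × ℕ^l with w_0 ≥ ... ≥ w_l. If G' is a spanning subgraph of G with minimum degree δ' ≥ w_l / l, then γ_w(G) ≤ γ_w(G'). -/

import Mathlib

open scoped Classical
open Finset SimpleGraph

/-- A `w`-dominating function: `f : V → {0,…,l}` with `f(N(v)) ≥ w_{f(v)}` for all `v`. -/
def WDom {V : Type*} [Fintype V] (G : SimpleGraph V) {l : ℕ} (w : Fin (l+1) → ℕ)
    (f : V → Fin (l+1)) : Prop :=
  ∀ v, w (f v) ≤ ∑ u, if G.Adj v u then (f u : ℕ) else 0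

/-- The `w`-domination number. -/
noncomputable def gammaW {V : Type*} [Fintype V] (G : SimpleGraph V) {l : ℕ}
    (w : Fin (l+1) → ℕ) : ℕ :=
  sInf {n | ∃ f : V → Fin (l+1), WDom G w f ∧ ∑ v, (f v : ℕ) = n}

/-- The Italian domination number `γ_I = γ_{(2,0,0)}`. -/
noncomputable def gammaI {V : Type*} [Fintype V] (G : SimpleGraph V) : ℕ :=
  gammaW G ![2,0,0]

/-- The domination number. -/
noncomputable def gamma {V : Type*} [Fintype V] (G : SimpleGraph V) : ℕ :=
  sInf {n | ∃ S : Finset V, (∀ v, v ∈ S ∨ ∃ u ∈ S, G.Adj u v) ∧ S.card = n}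

/-- The total domination number. -/
noncomputable def gammaT {V : Type*} [Fintype V] (G : SimpleGraph V) : ℕ :=
  sInf {n | ∃ S : Finset V, (∀ v, ∃ u ∈ S, G.Adj u v) ∧ S.card = n}

/-- The 2-domination number. -/
noncomputable def gamma2 {V : Type*} [Fintype V] (G : SimpleGraph V) : ℕ :=
  sInf {n | ∃ S : Finset V, (∀ v ∉ S, 2 ≤ (S.filter (fun u => G.Adj u v)).card) ∧ S.card = n}

/-- The double domination number. -/
noncomputable def gammaX2 {V : Type*} [Fintype V] (G : SimpleGraph V) : ℕ :=
  sInf {n | ∃ S : Finset V, (∀ v, 2 ≤ (S.filter (fun u => u = v ∨ G.Adj u v)).card) ∧ S.card = n}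

/-- The double total domination number. -/
noncomputable def gammaX2T {V : Type*} [Fintype V] (G : SimpleGraph V) : ℕ :=
  sInf {n | ∃ S : Finset V, (∀ v, 2 ≤ (S.filter (fun u => G.Adj u v)).card) ∧ S.card = n}

/-- The lexicographic product `G ∘ H`. -/
def lexProd {V W : Type*} (G : SimpleGraph V) (H : SimpleGraph W) : SimpleGraph (V × W) where
  Adj x y := G.Adj x.1 y.1 ∨ (x.1 = y.1 ∧ H.Adj x.2 y.2)
  symm := ⟨by
    rintro x y (h | ⟨h1, h2⟩)
    · exact Or.inl h.symm
    · exact Or.inr ⟨h1.symm, h2.symm⟩⟩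
  loopless := ⟨by
    rintro x (h | ⟨_, h⟩)
    · exact G.irrefl h
    · exact H.irrefl h⟩

/-! For `l ≥ 1`, putting weight `l` on every vertex is `w`-dominating in `G'`: each neighbourhood
carries at least `l δ' ≥ w_l`. Hence `w`-dominating functions of `G'` exist, and a minimum one
stays `w`-dominating in the supergraph `G`, whose neighbourhoods are larger. For `l = 0` every
function has weight `0`, so both numbers vanish. -/

section

variable {V : Type*} [Fintype V] {l : ℕ} {w : Fin (l+1) → ℕ}

theorem SimpleGraph.sum_ite_adj_const (G : SimpleGraph V) (v : V) (c : ℕ) :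
    (∑ u, if G.Adj v u then c else 0) = G.degree v * c := by
  rw [← Nat.cast_id (G.degree v), G.degree_eq_sum_if_adj v, Finset.sum_mul]
  simp only [ite_mul, one_mul, zero_mul]

theorem WDom.mono {G G' : SimpleGraph V} {f : V → Fin (l+1)} (hsub : G' ≤ G)
    (hf : WDom G' w f) : WDom G w f := fun v =>
  (hf v).trans <| Finset.sum_le_sum fun u _ => by
    by_cases h : G'.Adj v u
    · simp [h, hsub h]
    · simp [h]

theorem wDom_const_last {G : SimpleGraph V} (h : w (Fin.last l) ≤ G.minDegree * l) :
    WDom G w (fun _ => Fin.last l) := fun v => by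
  dsimp only
  rw [Fin.val_last, G.sum_ite_adj_const]
  exact h.trans (Nat.mul_le_mul_right _ (G.minDegree_le_degree v))

theorem gammaW_le_of_le_of_wDom {G G' : SimpleGraph V} {f : V → Fin (l+1)} (hsub : G' ≤ G)
    (hf : WDom G' w f) : gammaW G w ≤ gammaW G' w := by
  obtain ⟨g, hg, hsum⟩ := Nat.sInf_mem (s := {n | ∃ f, WDom G' w f ∧ ∑ v, (f v : ℕ) = n})
    ⟨_, f, hf, rfl⟩
  exact Nat.sInf_le ⟨g, hg.mono hsub, hsum⟩

theorem gammaW_eq_zero_of_fin_one (G : SimpleGraph V) (w : Fin (0+1) → ℕ) : gammaW G w = 0 := by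
  have hzero : {n | ∃ f : V → Fin 1, WDom G w f ∧ ∑ v, (f v : ℕ) = n} ⊆ {0} := by
    rintro _ ⟨f, -, rfl⟩
    simp [Fin.val_eq_zero]
  -- `sInf ∅ = 0` covers the case where no `w`-dominating function exists.
  rw [gammaW, Nat.sInf_eq_zero]
  rcases Set.subset_singleton_iff_eq.mp hzero with h | h <;> rw [h]
  exacts [Or.inr rfl, Or.inl rfl]

end

theorem gammaW_le_of_spanning_subgraph_general {V : Type*} [Fintype V]
    (G G' : SimpleGraph V) {l : ℕ} (w : Fin (l+1) → ℕ)
    (hsub : G' ≤ G)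
    (hdeg : (w (Fin.last l) : ℚ) / l ≤ (G'.minDegree : ℚ)) :
    gammaW G w ≤ gammaW G' w := by
  rcases Nat.eq_zero_or_pos l with rfl | hl
  · rw [gammaW_eq_zero_of_fin_one]
    exact Nat.zero_le _
  · have hlast : w (Fin.last l) ≤ G'.minDegree * l := by
      exact_mod_cast (div_le_iff₀ (by exact_mod_cast hl : (0 : ℚ) < l)).mp hdeg
    exact gammaW_le_of_le_of_wDom hsub (wDom_const_last hlast)

theorem gammaW_le_of_spanning_subgraph {V : Type*} [Fintype V]
    (G G' : SimpleGraph V) {l : ℕ} (w : Fin (l+1) → ℕ)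
    (hw : Antitone w) (h0 : 1 ≤ w 0) (hsub : G' ≤ G)
    (hdeg : (w (Fin.last l) : ℚ) / l ≤ (G'.minDegree : ℚ)) :
    gammaW G w ≤ gammaW G' w :=
  gammaW_le_of_spanning_subgraph_general G G' w hsub hdeg
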